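/- Let m ∈ ℕ, let E_1, …, E_m be Banach lattices and G a Banach space. A continuous m-linear operator A : E_1 × ⋯ × E_m → G is almost Dunford–Pettis if and only if ‖A(x_{1,n},…,x_{m,n})‖ → 0 whenever, for each j = 1,…,m, (x_{j,n})_n is a disjoint weakly null sequence of positive elements of E_j. -/

import Mathlib

/-!
Write `x_{j,n} = x_{j,n}⁺ - x_{j,n}⁻` and expand `A` multilinearly: `‖A (x_{1,n}, …, x_{m,n})‖`
is at most the sum, over the `2^m` sign patterns, of `‖A‖` evaluated at sequences of positive
and negative parts. These sequences are disjoint and positive, and they are still weakly null.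
For a positive functional `g`, the functional `P = g ∘ (band projection onto the band generated
by the x_n⁺)`, defined on the cone by `P y = ∑ₙ supₖ g (y ⊓ k • x_n⁺)`, satisfies
`P x_n = g x_n⁺`, so `g x_n⁺ → 0`; and every continuous functional is a difference of two
positive ones.
-/

open Filter Topology

/-- A sequence in a Banach lattice is disjoint if `|x n| ⊓ |x k| = 0` for `n ≠ k`. -/
def DisjointSeq {E : Type*} [NormedAddCommGroup E] [Lattice E] [IsOrderedAddMonoid E]
    [HasSolidNorm E] (x : ℕ → E) : Prop :=
  ∀ n k, n ≠ k → |x n| ⊓ |x k| = 0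

/-- A sequence is weakly null if `f (x n) → 0` for every continuous linear functional `f`. -/
def WeaklyNull {E : Type*} [NormedAddCommGroup E] [NormedSpace ℝ E] (x : ℕ → E) : Prop :=
  ∀ f : E →L[ℝ] ℝ, Tendsto (fun n => f (x n)) atTop (𝓝 0)

open Finset
open scoped Pointwise

lemma inf_eq_zero_of_le_of_le {α : Type*} [Lattice α] [Zero α] {a b c d : α} (ha : 0 ≤ a)
    (hb : 0 ≤ b) (hac : a ≤ c) (hbd : b ≤ d) (hcd : c ⊓ d = 0) : a ⊓ b = 0 :=
  le_antisymm (hcd ▸ inf_le_inf hac hbd) (le_inf ha hb)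

section LatticeOrderedGroup

variable {α : Type*} [Lattice α] [AddCommGroup α] [IsOrderedAddMonoid α] {a b c y : α}

lemma posPart_le_abs (a : α) : a⁺ ≤ |a| := by
  rw [posPart_def]
  exact sup_le (le_abs_self a) (abs_nonneg a)

lemma negPart_le_abs (a : α) : a⁻ ≤ |a| := by
  rw [negPart_def]
  exact sup_le (neg_le_abs a) (abs_nonneg a)

lemma abs_posPart_le_abs (a : α) : |a⁺| ≤ |a| :=
  (abs_of_nonneg (posPart_nonneg a)).symm ▸ posPart_le_abs a

lemma abs_negPart_le_abs (a : α) : |a⁻| ≤ |a| :=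
  (abs_of_nonneg (negPart_nonneg a)).symm ▸ negPart_le_abs a

lemma add_inf_le_add_inf (ha : 0 ≤ a) (hb : 0 ≤ b) (hc : 0 ≤ c) :
    (a + b) ⊓ c ≤ a ⊓ c + b ⊓ c := by
  rw [inf_add, add_inf b c a]
  exact le_inf (le_inf inf_le_left (inf_le_right.trans (le_add_of_nonneg_left ha)))
    (inf_le_right.trans (le_add_of_nonneg_right (le_inf hb hc)))

lemma nsmul_inf_eq_zero (ha : 0 ≤ a) (hb : 0 ≤ b) (hab : a ⊓ b = 0) (n : ℕ) :
    n • a ⊓ b = 0 := by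
  induction n with
  | zero => simpa using inf_eq_left.2 hb
  | succ n ih =>
    refine le_antisymm ?_ (le_inf (nsmul_nonneg ha _) hb)
    calc (n + 1) • a ⊓ b ≤ n • a ⊓ b + a ⊓ b := by
          rw [succ_nsmul]; exact add_inf_le_add_inf (nsmul_nonneg ha n) ha hb
      _ = 0 := by rw [ih, hab, add_zero]

lemma nsmul_inf_nsmul_eq_zero (ha : 0 ≤ a) (hb : 0 ≤ b) (hab : a ⊓ b = 0) (m n : ℕ) :
    m • a ⊓ n • b = 0 := by
  have hba : n • b ⊓ a = 0 := nsmul_inf_eq_zero hb ha (inf_comm a b ▸ hab) n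
  exact nsmul_inf_eq_zero ha (nsmul_nonneg hb n) (inf_comm a _ ▸ hba) m

lemma Icc_zero_add_Icc_zero (ha : 0 ≤ a) (hb : 0 ≤ b) :
    Set.Icc 0 a + Set.Icc 0 b = Set.Icc 0 (a + b) := by
  ext z
  simp only [Set.mem_add, Set.mem_Icc]
  constructor
  · rintro ⟨z₁, ⟨hz₁, hz₁a⟩, z₂, ⟨hz₂, hz₂b⟩, rfl⟩
    exact ⟨add_nonneg hz₁ hz₂, add_le_add hz₁a hz₂b⟩
  · rintro ⟨hz, hzab⟩
    refine ⟨z ⊓ a, ⟨le_inf hz ha, inf_le_right⟩, z - z ⊓ a,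
      ⟨sub_nonneg.2 inf_le_left, ?_⟩, add_sub_cancel _ _⟩
    rw [sub_le_iff_le_add, add_inf]
    exact le_inf (le_add_of_nonneg_left hb) (add_comm a b ▸ hzab)

variable {ι : Type*}

lemma sum_inf_le_sum_inf (s : Finset ι) {v : ι → α} (hv : ∀ i, 0 ≤ v i) (ha : 0 ≤ a) :
    (∑ i ∈ s, v i) ⊓ a ≤ ∑ i ∈ s, v i ⊓ a := by
  classical
  induction s using Finset.induction_on with
  | empty => simp
  | insert k s hk ih =>
    rw [sum_insert hk, sum_insert hk]
    exact (add_inf_le_add_inf (hv k) (sum_nonneg fun i _ => hv i) ha).trans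
      (add_le_add_right ih _)

lemma sum_le_of_pairwise_inf_eq_zero (s : Finset ι) {v : ι → α} (hv : ∀ i, 0 ≤ v i)
    (hdisj : Pairwise fun i j => v i ⊓ v j = 0) (hvy : ∀ i, v i ≤ y) (hy : 0 ≤ y) :
    ∑ i ∈ s, v i ≤ y := by
  classical
  induction s using Finset.induction_on with
  | empty => simpa using hy
  | insert k s hk ih =>
    have hS : 0 ≤ ∑ i ∈ s, v i := sum_nonneg fun i _ => hv i
    have hkS : v k ⊓ ∑ i ∈ s, v i = 0 := by
      refine le_antisymm ?_ (le_inf (hv k) hS)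
      calc v k ⊓ ∑ i ∈ s, v i ≤ ∑ i ∈ s, v i ⊓ v k :=
            inf_comm (v k) _ ▸ sum_inf_le_sum_inf s hv (hv k)
        _ = 0 := sum_eq_zero fun i hi => hdisj (ne_of_mem_of_not_mem hi hk)
    rw [sum_insert hk, ← inf_add_sup, hkS, zero_add]
    exact sup_le (hvy k) ih

end LatticeOrderedGroup

section BandComponent

variable {α : Type*} [Lattice α] [AddCommGroup α] {g : α →+ ℝ} {u y a b : α}

/-- For `u, y ≥ 0` this is the value at `y` of the component of `g` in the band generated
by `u`. -/
noncomputable def bandComponent (g : α →+ ℝ) (u y : α) : ℝ :=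
  ⨆ n : ℕ, g (y ⊓ n • u)

lemma bddAbove_range_apply_inf_nsmul (hg : Monotone g) (u y : α) :
    BddAbove (Set.range fun n : ℕ => g (y ⊓ n • u)) :=
  ⟨g y, by rintro _ ⟨n, rfl⟩; exact hg inf_le_left⟩

lemma bandComponent_le (hg : Monotone g) (u y : α) : bandComponent g u y ≤ g y :=
  ciSup_le fun _ => hg inf_le_left

lemma bandComponent_nonneg (hg : Monotone g) (hy : 0 ≤ y) (u : α) :
    0 ≤ bandComponent g u y :=
  le_ciSup_of_le (bddAbove_range_apply_inf_nsmul hg u y) 0 (by simp [inf_eq_right.2 hy])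

lemma bandComponent_self (hg : Monotone g) (u : α) : bandComponent g u u = g u :=
  le_antisymm (bandComponent_le hg u u)
    (le_ciSup_of_le (bddAbove_range_apply_inf_nsmul hg u u) 1 (by simp))

variable [IsOrderedAddMonoid α]

lemma monotone_apply_inf_nsmul (hg : Monotone g) (hu : 0 ≤ u) (y : α) :
    Monotone fun n : ℕ => g (y ⊓ n • u) :=
  fun _ _ hmn => hg (inf_le_inf_left y (nsmul_le_nsmul_left hu hmn))

lemma bandComponent_eq_zero (hy : 0 ≤ y) (hu : 0 ≤ u) (hyu : y ⊓ u = 0) :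
    bandComponent g u y = 0 := by
  have h : ∀ n : ℕ, y ⊓ n • u = 0 := fun n =>
    inf_comm y _ ▸ nsmul_inf_eq_zero hu hy (inf_comm y u ▸ hyu) n
  simp [bandComponent, h]

lemma bandComponent_add (hg : Monotone g) (ha : 0 ≤ a) (hb : 0 ≤ b) (hu : 0 ≤ u) :
    bandComponent g u (a + b) = bandComponent g u a + bandComponent g u b := by
  have hbdd := bddAbove_range_apply_inf_nsmul hg u
  refine le_antisymm (ciSup_le fun n => ?_) (ciSup_add_ciSup_le fun n k => ?_)
  · calc g ((a + b) ⊓ n • u) ≤ g (a ⊓ n • u + b ⊓ n • u) :=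
          hg (add_inf_le_add_inf ha hb (nsmul_nonneg hu n))
      _ = g (a ⊓ n • u) + g (b ⊓ n • u) := map_add g _ _
      _ ≤ bandComponent g u a + bandComponent g u b :=
          add_le_add (le_ciSup (hbdd a) n) (le_ciSup (hbdd b) n)
  · calc g (a ⊓ n • u) + g (b ⊓ k • u) = g (a ⊓ n • u + b ⊓ k • u) := (map_add g _ _).symm
      _ ≤ g ((a + b) ⊓ (n + k) • u) := hg <| le_inf (add_le_add inf_le_left inf_le_left)
          (add_nsmul u n k ▸ add_le_add inf_le_right inf_le_right)
      _ ≤ bandComponent g u (a + b) := le_ciSup (hbdd (a + b)) (n + k)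

lemma sum_bandComponent_le {ι : Type*} (hg : Monotone g) (hy : 0 ≤ y) {u : ι → α}
    (hu : ∀ i, 0 ≤ u i) (hdisj : Pairwise fun i j => u i ⊓ u j = 0) (s : Finset ι) :
    ∑ i ∈ s, bandComponent g (u i) y ≤ g y := by
  refine le_of_tendsto' (tendsto_finsetSum s fun i _ => tendsto_atTop_ciSup
    (monotone_apply_inf_nsmul hg (hu i) y) (bddAbove_range_apply_inf_nsmul hg (u i) y))
    fun n => ?_
  rw [← map_sum]
  refine hg (sum_le_of_pairwise_inf_eq_zero s (fun i => le_inf hy (nsmul_nonneg (hu i) n))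
    (fun i j hij => ?_) (fun i => inf_le_left) hy)
  exact inf_eq_zero_of_le_of_le (le_inf hy (nsmul_nonneg (hu i) n))
    (le_inf hy (nsmul_nonneg (hu j) n)) inf_le_right inf_le_right
    (nsmul_inf_nsmul_eq_zero (hu i) (hu j) (hdisj hij) n n)

end BandComponent

section NormedLattice

variable {E : Type*} [NormedAddCommGroup E] [Lattice E] [HasSolidNorm E] [IsOrderedAddMonoid E]

lemma norm_le_norm_of_nonneg_of_le {a b : E} (ha : 0 ≤ a) (hab : a ≤ b) : ‖a‖ ≤ ‖b‖ :=
  norm_le_norm_of_abs_le_abs <| by rwa [abs_of_nonneg ha, abs_of_nonneg (ha.trans hab)]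

lemma norm_posPart_le (a : E) : ‖a⁺‖ ≤ ‖a‖ :=
  norm_le_norm_of_abs_le_abs (abs_posPart_le_abs a)

lemma norm_negPart_le (a : E) : ‖a⁻‖ ≤ ‖a‖ :=
  norm_le_norm_of_abs_le_abs (abs_negPart_le_abs a)

variable [NormedSpace ℝ E]

/-- The extension is `y ↦ p y⁺ - p y⁻`; being additive and bounded, it is `ℝ`-linear. -/
lemma exists_continuousLinearMap_eq_of_nonneg {p : E → ℝ} {C : ℝ}
    (hadd : ∀ a b, 0 ≤ a → 0 ≤ b → p (a + b) = p a + p b)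
    (hnonneg : ∀ a, 0 ≤ a → 0 ≤ p a) (hbound : ∀ a, 0 ≤ a → p a ≤ C * ‖a‖) :
    ∃ P : E →L[ℝ] ℝ, ∀ a, 0 ≤ a → P a = p a := by
  have hp0 : p 0 = 0 := by simpa using hadd 0 0 le_rfl le_rfl
  let q : E → ℝ := fun y => p y⁺ - p y⁻
  have hq_sub : ∀ a b : E, 0 ≤ a → 0 ≤ b → q (a - b) = p a - p b := by
    intro a b ha hb
    have hsplit : (a - b)⁺ + b = a + (a - b)⁻ :=
      sub_eq_sub_iff_add_eq_add.1 (posPart_sub_negPart (a - b))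
    have hp := hadd _ _ (posPart_nonneg (a - b)) hb
    rw [hsplit, hadd _ _ ha (negPart_nonneg (a - b))] at hp
    simp only [q]
    linarith
  have hq_add : ∀ y z : E, q (y + z) = q y + q z := by
    intro y z
    have hyz : y + z = (y⁺ + z⁺) - (y⁻ + z⁻) := by
      conv_lhs => rw [← posPart_sub_negPart y, ← posPart_sub_negPart z]
      abel
    rw [hyz, hq_sub _ _ (add_nonneg (posPart_nonneg y) (posPart_nonneg z))
      (add_nonneg (negPart_nonneg y) (negPart_nonneg z)),
      hadd _ _ (posPart_nonneg y) (posPart_nonneg z),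
      hadd _ _ (negPart_nonneg y) (negPart_nonneg z)]
    ring
  have hq_bound : ∀ y : E, ‖q y‖ ≤ |C| * ‖y‖ := by
    intro y
    have hbound' : ∀ a, 0 ≤ a → ‖a‖ ≤ ‖y‖ → p a ≤ |C| * ‖y‖ := fun a ha hay =>
      calc p a ≤ C * ‖a‖ := hbound a ha
        _ ≤ |C| * ‖y‖ := mul_le_mul (le_abs_self C) hay (norm_nonneg a) (abs_nonneg C)
    exact abs_sub_le_of_nonneg_of_le (hnonneg _ (posPart_nonneg y))
      (hbound' _ (posPart_nonneg y) (norm_posPart_le y)) (hnonneg _ (negPart_nonneg y))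
      (hbound' _ (negPart_nonneg y) (norm_negPart_le y))
  let qHom : E →+ ℝ := AddMonoidHom.mk' q hq_add
  refine ⟨qHom.toRealLinearMap (AddMonoidHomClass.continuous_of_bound qHom |C| hq_bound),
    fun a ha => ?_⟩
  change q a = p a
  simpa [hp0] using hq_sub a 0 ha le_rfl

/-- Riesz–Kantorovich: `F y = sSup (f '' [0, y])` for `y ≥ 0`. -/
lemma ContinuousLinearMap.exists_monotone_sub_monotone_eq (f : E →L[ℝ] ℝ) :
    ∃ F G : E →L[ℝ] ℝ, Monotone F ∧ Monotone G ∧ f = F - G := by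
  let p : E → ℝ := fun y => sSup (f '' Set.Icc 0 y)
  have hne : ∀ y : E, 0 ≤ y → (f '' Set.Icc 0 y).Nonempty := fun y hy =>
    ⟨f 0, Set.mem_image_of_mem f ⟨le_rfl, hy⟩⟩
  have hub : ∀ y : E, ∀ r ∈ f '' Set.Icc 0 y, r ≤ ‖f‖ * ‖y‖ := by
    rintro y _ ⟨z, ⟨hz, hzy⟩, rfl⟩
    exact (le_abs_self _).trans <| (f.le_opNorm z).trans <|
      mul_le_mul_of_nonneg_left (norm_le_norm_of_nonneg_of_le hz hzy) (norm_nonneg f)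
  have hbdd : ∀ y : E, BddAbove (f '' Set.Icc 0 y) := fun y => ⟨_, hub y⟩
  have hle : ∀ y : E, 0 ≤ y → f y ≤ p y := fun y hy =>
    le_csSup (hbdd y) ⟨y, ⟨hy, le_rfl⟩, rfl⟩
  have hnonneg : ∀ y : E, 0 ≤ y → 0 ≤ p y := fun y hy =>
    le_csSup (hbdd y) ⟨0, ⟨le_rfl, hy⟩, map_zero f⟩
  have hadd : ∀ a b : E, 0 ≤ a → 0 ≤ b → p (a + b) = p a + p b := fun a b ha hb => by
    simp only [p]
    rw [← Icc_zero_add_Icc_zero ha hb, Set.image_add,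
      csSup_add (hne a ha) (hbdd a) (hne b hb) (hbdd b)]
  obtain ⟨F, hF⟩ := exists_continuousLinearMap_eq_of_nonneg hadd hnonneg
    fun y hy => csSup_le (hne y hy) (hub y)
  refine ⟨F, F - f, (monotone_iff_map_nonneg F).2 fun y hy => hF y hy ▸ hnonneg y hy,
    (monotone_iff_map_nonneg (F - f)).2 fun y hy => ?_, by abel⟩
  rw [sub_apply, hF y hy, sub_nonneg]
  exact hle y hy

/-- `P` is `g` followed by the band projection onto the band generated by the `u i`; it is
built directly, since `E` need not have band projections. -/
lemma exists_eq_on_band {ι : Type*} {g : E →L[ℝ] ℝ} (hg : Monotone g) {u : ι → E}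
    (hu : ∀ i, 0 ≤ u i) (hdisj : Pairwise fun i j => u i ⊓ u j = 0) :
    ∃ P : E →L[ℝ] ℝ, (∀ i, P (u i) = g (u i)) ∧
      ∀ y, 0 ≤ y → (∀ i, y ⊓ u i = 0) → P y = 0 := by
  let g' : E →+ ℝ := g
  have hg' : Monotone g' := hg
  let p : E → ℝ := fun y => ∑' i, bandComponent g' (u i) y
  have hsum : ∀ y : E, 0 ≤ y → Summable fun i => bandComponent g' (u i) y := fun y hy =>
    summable_of_sum_le (fun i => bandComponent_nonneg hg' hy _)
      (sum_bandComponent_le hg' hy hu hdisj)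
  have hadd : ∀ a b : E, 0 ≤ a → 0 ≤ b → p (a + b) = p a + p b := fun a b ha hb => by
    simp only [p]
    rw [← (hsum a ha).tsum_add (hsum b hb)]
    exact tsum_congr fun i => bandComponent_add hg' ha hb (hu i)
  have hbound : ∀ y : E, 0 ≤ y → p y ≤ ‖g‖ * ‖y‖ := fun y hy =>
    ((hsum y hy).tsum_le_of_sum_le (sum_bandComponent_le hg' hy hu hdisj)).trans <|
      (le_abs_self _).trans (g.le_opNorm y)
  obtain ⟨P, hP⟩ := exists_continuousLinearMap_eq_of_nonneg hadd
    (fun y hy => tsum_nonneg fun i => bandComponent_nonneg hg' hy _) hbound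
  refine ⟨P, fun i => ?_, fun y hy hyu => ?_⟩
  · rw [hP _ (hu i)]
    refine (tsum_eq_single i fun j hji => ?_).trans (bandComponent_self hg' (u i))
    exact bandComponent_eq_zero (hu i) (hu j) (hdisj hji.symm)
  · rw [hP y hy]
    exact (tsum_congr fun i => bandComponent_eq_zero hy (hu i) (hyu i)).trans tsum_zero

end NormedLattice

section DisjointWeaklyNull

variable {E : Type*} [NormedAddCommGroup E] [Lattice E] [IsOrderedAddMonoid E] [HasSolidNorm E]
  {x : ℕ → E}

lemma DisjointSeq.mono {y : ℕ → E} (hx : DisjointSeq x) (hyx : ∀ n, |y n| ≤ |x n|) :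
    DisjointSeq y := fun n k hnk =>
  inf_eq_zero_of_le_of_le (abs_nonneg _) (abs_nonneg _) (hyx n) (hyx k) (hx n k hnk)

variable [NormedSpace ℝ E]

lemma DisjointSeq.tendsto_apply_posPart (hx : DisjointSeq x) (hw : WeaklyNull x)
    {g : E →L[ℝ] ℝ} (hg : Monotone g) : Tendsto (fun n => g (x n)⁺) atTop (𝓝 0) := by
  have hdisj : ∀ n k, n ≠ k → (x n)⁻ ⊓ (x k)⁺ = 0 := fun n k hnk =>
    inf_eq_zero_of_le_of_le (negPart_nonneg _) (posPart_nonneg _) (negPart_le_abs _)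
      (posPart_le_abs _) (hx n k hnk)
  obtain ⟨P, hPu, hPzero⟩ := exists_eq_on_band hg (fun n => posPart_nonneg (x n))
    fun n k hnk => inf_eq_zero_of_le_of_le (posPart_nonneg _) (posPart_nonneg _)
      (posPart_le_abs _) (posPart_le_abs _) (hx n k hnk)
  refine (hw P).congr fun n => ?_
  have hneg : P (x n)⁻ = 0 := hPzero _ (negPart_nonneg _) fun k => by
    rcases eq_or_ne n k with rfl | hnk
    · exact inf_comm (x n)⁺ _ ▸ posPart_inf_negPart_eq_zero (x n)
    · exact hdisj n k hnk
  rw [← posPart_sub_negPart (x n), map_sub, hneg, sub_zero, hPu,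
    posPart_sub_negPart]

lemma WeaklyNull.posPart (hx : DisjointSeq x) (hw : WeaklyNull x) :
    WeaklyNull fun n => (x n)⁺ := fun f => by
  obtain ⟨F, G, hF, hG, rfl⟩ := f.exists_monotone_sub_monotone_eq
  simpa using (hx.tendsto_apply_posPart hw hF).sub (hx.tendsto_apply_posPart hw hG)

lemma WeaklyNull.negPart (hx : DisjointSeq x) (hw : WeaklyNull x) :
    WeaklyNull fun n => (x n)⁻ := by
  simp_rw [← posPart_neg]
  refine WeaklyNull.posPart (fun n k hnk => ?_) fun f => ?_
  · simpa only [abs_neg] using hx n k hnk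
  · simpa using (hw f).neg

end DisjointWeaklyNull

theorem MultilinearMap.norm_map_sub_le {R ι G : Type*} {M : ι → Type*} [CommRing R] [Fintype ι]
    [DecidableEq ι] [∀ i, AddCommGroup (M i)] [∀ i, Module R (M i)] [SeminormedAddCommGroup G]
    [Module R G] (f : MultilinearMap R M G) (a b : ∀ i, M i) :
    ‖f (a - b)‖ ≤ ∑ s : Finset ι, ‖f (s.piecewise a b)‖ := by
  rw [sub_eq_add_neg, f.map_add_univ]
  refine (norm_sum_le _ _).trans (le_of_eq (sum_congr rfl fun s _ => ?_))
  let c : ι → R := fun i => if i ∈ s then 1 else -1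
  have hpiece : s.piecewise a (-b) = fun i => c i • s.piecewise a b i := by
    ext i
    by_cases hi : i ∈ s <;> simp [c, hi]
  have hsign : ∏ i, c i = 1 ∨ ∏ i, c i = -1 :=
    prod_induction c (fun r => r = 1 ∨ r = -1)
      (by rintro _ _ (rfl | rfl) (rfl | rfl) <;> simp) (Or.inl rfl)
      fun i _ => by by_cases hi : i ∈ s <;> simp [c, hi]
  rw [hpiece, f.map_smul_univ]
  rcases hsign with h | h <;> simp [h]

theorem almostDunfordPettis_iff_positive_general
    {m : ℕ} {E : Fin m → Type*} [∀ i, NormedAddCommGroup (E i)] [∀ i, Lattice (E i)]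
    [∀ i, IsOrderedAddMonoid (E i)] [∀ i, HasSolidNorm (E i)]
    [∀ i, NormedSpace ℝ (E i)]
    {G : Type*} [NormedAddCommGroup G] [NormedSpace ℝ G]
    (A : ContinuousMultilinearMap ℝ E G) :
    (∀ x : ∀ i, ℕ → E i, (∀ i, DisjointSeq (x i)) → (∀ i, WeaklyNull (x i)) →
        Tendsto (fun n => ‖A (fun i => x i n)‖) atTop (𝓝 0)) ↔
      (∀ x : ∀ i, ℕ → E i, (∀ i, DisjointSeq (x i)) → (∀ i, WeaklyNull (x i)) →
        (∀ i n, 0 ≤ x i n) →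
        Tendsto (fun n => ‖A (fun i => x i n)‖) atTop (𝓝 0)) := by
  refine ⟨fun h x hd hw _ => h x hd hw, fun h x hd hw => ?_⟩
  classical
  let y : Finset (Fin m) → ∀ i, ℕ → E i :=
    fun s i n => s.piecewise (fun i => (x i n)⁺) (fun i => (x i n)⁻) i
  have hy : ∀ s i, (y s i = fun n => (x i n)⁺) ∨ y s i = fun n => (x i n)⁻ := fun s i => by
    by_cases hi : i ∈ s <;> simp [y, hi]
  have hlim : ∀ s, Tendsto (fun n => ‖A fun i => y s i n‖) atTop (𝓝 0) := fun s => by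
    refine h (y s) (fun i => ?_) (fun i => ?_) (fun i n => ?_) <;>
      rcases hy s i with hyi | hyi <;> rw [hyi]
    exacts [(hd i).mono fun n => abs_posPart_le_abs _, (hd i).mono fun n => abs_negPart_le_abs _,
      (hw i).posPart (hd i), (hw i).negPart (hd i), posPart_nonneg _, negPart_nonneg _]
  refine squeeze_zero (fun _ => norm_nonneg _) (fun n => ?_)
    (by simpa using tendsto_finsetSum univ fun s _ => hlim s)
  calc ‖A fun i => x i n‖ = ‖A ((fun i => (x i n)⁺) - fun i => (x i n)⁻)‖ := by
        simp_rw [Pi.sub_def, posPart_sub_negPart]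
    _ ≤ ∑ s, ‖A fun i => y s i n‖ := A.toMultilinearMap.norm_map_sub_le _ _

/-- A continuous `m`-linear operator is almost Dunford–Pettis if and only if
`‖A (x 1 n, …, x m n)‖ → 0` whenever each `(x j n)ₙ` is a disjoint weakly null sequence of
**positive** elements. -/
theorem almostDunfordPettis_iff_positive
    {m : ℕ} {E : Fin m → Type*} [∀ i, NormedAddCommGroup (E i)] [∀ i, Lattice (E i)]
    [∀ i, IsOrderedAddMonoid (E i)] [∀ i, HasSolidNorm (E i)]
    [∀ i, NormedSpace ℝ (E i)] [∀ i, CompleteSpace (E i)]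
    {G : Type*} [NormedAddCommGroup G] [NormedSpace ℝ G] [CompleteSpace G]
    (A : ContinuousMultilinearMap ℝ E G) :
    (∀ x : ∀ i, ℕ → E i, (∀ i, DisjointSeq (x i)) → (∀ i, WeaklyNull (x i)) →
        Tendsto (fun n => ‖A (fun i => x i n)‖) atTop (𝓝 0)) ↔
      (∀ x : ∀ i, ℕ → E i, (∀ i, DisjointSeq (x i)) → (∀ i, WeaklyNull (x i)) →
        (∀ i n, 0 ≤ x i n) →
        Tendsto (fun n => ‖A (fun i => x i n)‖) atTop (𝓝 0)) :=
  almostDunfordPettis_iff_positive_general A
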